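/- arXiv:2201.06931 — 2 statements merged into one kernel-verified Lean document; each statement's English description precedes it below -/
import Mathlib

section
/- Let n, N be positive integers, Φ a real n×N matrix such that ΦΦᵀ is invertible, and P := Φᵀ(ΦΦᵀ)⁻¹Φ the associated N×N matrix. Let ε > 0, let 𝒟 : ℝ^N → ℝ^N be a map such that x ↦ 𝒟(x) − x is ε-Lipschitz, fix y ∈ ℝ^n, and define the DE-GAP iteration map f(x) := 𝒟(x + Φᵀ(ΦΦᵀ)⁻¹(y − Φx)). Then for all x, x' ∈ ℝ^N, ‖f(x) − f(x')‖ ≤ η·‖x − x'‖, where η = (1 + ε)·max_i |1 − λ_i| and λ₁, …, λ_N are the eigenvalues of the symmetric matrix P. (Convergence of DE-GAP, Theorem 2.) -/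
/-!
The iteration map is `f = 𝒟 ∘ g` with `g x = x + Φᵀ(ΦΦᵀ)⁻¹(y − Φx)`, and
`g x − g x' = (I − P)(x − x')`. Expanding `x − x'` in an orthonormal eigenbasis of `P`, on which
`I − P` acts diagonally by `1 − λᵢ`, gives `‖g x − g x'‖ ≤ maxᵢ |1 − λᵢ| · ‖x − x'‖`; and
`𝒟 = (𝒟 − I) + I` is `(1 + ε)`-Lipschitz by the triangle inequality.
-/

open Matrix

theorem OrthonormalBasis.norm_apply_le_of_apply_eq_smul {𝕜 ι E : Type*} [RCLike 𝕜] [Fintype ι]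
    [NormedAddCommGroup E] [InnerProductSpace 𝕜 E] (b : OrthonormalBasis ι 𝕜 E)
    (T : E →ₗ[𝕜] E) (μ : ι → 𝕜) (hT : ∀ i, T (b i) = μ i • b i) (v : E) :
    ‖T v‖ ≤ (⨆ i, ‖μ i‖) * ‖v‖ := by
  set S := ⨆ i, ‖μ i‖
  have hμ : ∀ i, ‖μ i‖ ≤ S := le_ciSup (Set.finite_range _).bddAbove
  have hS : 0 ≤ S := Real.iSup_nonneg fun i => norm_nonneg _
  have hTv : T v = b.repr.symm (WithLp.toLp 2 fun i => μ i * b.repr v i) := by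
    rw [← b.sum_repr_symm]
    conv_lhs => rw [← b.sum_repr v]
    simp only [map_sum, map_smul, hT, smul_smul, mul_comm]
  rw [hTv, LinearIsometryEquiv.norm_map, ← b.repr.norm_map v]
  refine le_of_pow_le_pow_left₀ two_ne_zero (by positivity) ?_
  rw [mul_pow, EuclideanSpace.norm_sq_eq, EuclideanSpace.norm_sq_eq, Finset.mul_sum]
  refine Finset.sum_le_sum fun i _ => ?_
  rw [PiLp.toLp_apply, norm_mul, mul_pow]
  gcongr
  exact hμ i

theorem Matrix.IsHermitian.toEuclideanLin_eigenvectorBasis {𝕜 ι : Type*} [RCLike 𝕜]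
    [Fintype ι] [DecidableEq ι] {A : Matrix ι ι 𝕜} (hA : A.IsHermitian) (i : ι) :
    toEuclideanLin A (hA.eigenvectorBasis i) = (hA.eigenvalues i : 𝕜) • hA.eigenvectorBasis i := by
  apply WithLp.ofLp_injective
  rw [ofLp_toLpLin, toLin'_apply, hA.mulVec_eigenvectorBasis, WithLp.ofLp_smul,
    RCLike.real_smul_eq_coe_smul (K := 𝕜)]

theorem Matrix.IsHermitian.norm_sub_toEuclideanLin_le {ι : Type*} [Fintype ι] [DecidableEq ι]
    {A : Matrix ι ι ℝ} (hA : A.IsHermitian) (v : EuclideanSpace ℝ ι) :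
    ‖v - toEuclideanLin A v‖ ≤ (⨆ i, |1 - hA.eigenvalues i|) * ‖v‖ := by
  let T : EuclideanSpace ℝ ι →ₗ[ℝ] EuclideanSpace ℝ ι := LinearMap.id - toEuclideanLin A
  have hT (i : ι) : T (hA.eigenvectorBasis i) = (1 - hA.eigenvalues i) • hA.eigenvectorBasis i := by
    simp only [T, LinearMap.sub_apply, LinearMap.id_apply, hA.toEuclideanLin_eigenvectorBasis,
      RCLike.ofReal_real_eq_id, id, sub_smul, one_smul]
  simpa only [Real.norm_eq_abs, T, LinearMap.sub_apply, LinearMap.id_apply] using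
    hA.eigenvectorBasis.norm_apply_le_of_apply_eq_smul T _ hT v

/-- For `M = Φᵀ(ΦΦᵀ)⁻¹` this is the orthogonal projection of `x` onto `{x | Φ x = y}`. -/
def gapStep {𝕜 m n : Type*} [RCLike 𝕜] [Fintype m] [Fintype n] [DecidableEq m]
    [DecidableEq n] (M : Matrix n m 𝕜) (Φ : Matrix m n 𝕜) (y : EuclideanSpace 𝕜 m)
    (x : EuclideanSpace 𝕜 n) : EuclideanSpace 𝕜 n :=
  x + toEuclideanLin M (y - toEuclideanLin Φ x)

theorem gapStep_sub_gapStep {𝕜 m n : Type*} [RCLike 𝕜] [Fintype m] [Fintype n] [DecidableEq m]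
    [DecidableEq n] (M : Matrix n m 𝕜) (Φ : Matrix m n 𝕜) (y : EuclideanSpace 𝕜 m)
    (x x' : EuclideanSpace 𝕜 n) :
    gapStep M Φ y x - gapStep M Φ y x' = (x - x') - toEuclideanLin (M * Φ) (x - x') := by
  simp only [gapStep, toLpLin_mul_same, LinearMap.comp_apply, map_sub]
  abel

theorem norm_sub_le_one_add_mul_of_norm_sub_id_le {E : Type*} [SeminormedAddCommGroup E]
    {D : E → E} {ε : ℝ} {x x' : E} (h : ‖(D x - x) - (D x' - x')‖ ≤ ε * ‖x - x'‖) :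
    ‖D x - D x'‖ ≤ (1 + ε) * ‖x - x'‖ :=
  calc ‖D x - D x'‖ = ‖((D x - x) - (D x' - x')) + (x - x')‖ := by congr 1; abel
    _ ≤ ε * ‖x - x'‖ + ‖x - x'‖ := (norm_add_le _ _).trans (by gcongr)
    _ = (1 + ε) * ‖x - x'‖ := by ring

theorem stmt_1_general (n N : ℕ)
    (Φ : Matrix (Fin n) (Fin N) ℝ)
    (P : Matrix (Fin N) (Fin N) ℝ) (hPdef : P = Φᵀ * (Φ * Φᵀ)⁻¹ * Φ)
    (hP : P.IsHermitian)
    (ε : ℝ) (hε : 0 < ε)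
    (D : EuclideanSpace ℝ (Fin N) → EuclideanSpace ℝ (Fin N))
    (hD : ∀ x x' : EuclideanSpace ℝ (Fin N), ‖(D x - x) - (D x' - x')‖ ≤ ε * ‖x - x'‖)
    (y : EuclideanSpace ℝ (Fin n))
    (f : EuclideanSpace ℝ (Fin N) → EuclideanSpace ℝ (Fin N))
    (hf : ∀ x : EuclideanSpace ℝ (Fin N),
      f x = D (x + Matrix.toEuclideanLin (Φᵀ * (Φ * Φᵀ)⁻¹) (y - Matrix.toEuclideanLin Φ x))) :
    ∀ x x' : EuclideanSpace ℝ (Fin N),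
      ‖f x - f x'‖ ≤ ((1 + ε) * ⨆ i : Fin N, |1 - hP.eigenvalues i|) * ‖x - x'‖ := by
  intro x x'
  set g := gapStep (Φᵀ * (Φ * Φᵀ)⁻¹) Φ y
  have hg : ‖g x - g x'‖ ≤ (⨆ i, |1 - hP.eigenvalues i|) * ‖x - x'‖ := by
    rw [gapStep_sub_gapStep, ← hPdef]
    exact hP.norm_sub_toEuclideanLin_le _
  calc ‖f x - f x'‖ = ‖D (g x) - D (g x')‖ := by simp only [hf, g, gapStep]
    _ ≤ (1 + ε) * ‖g x - g x'‖ := norm_sub_le_one_add_mul_of_norm_sub_id_le (hD _ _)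
    _ ≤ (1 + ε) * ((⨆ i, |1 - hP.eigenvalues i|) * ‖x - x'‖) :=
        mul_le_mul_of_nonneg_left hg (by linarith)
    _ = ((1 + ε) * ⨆ i, |1 - hP.eigenvalues i|) * ‖x - x'‖ := (mul_assoc _ _ _).symm

/-- **Convergence of DE-GAP (Theorem 2).**
Let `Φ` be a real `n × N` matrix with `ΦΦᵀ` invertible, `P = Φᵀ(ΦΦᵀ)⁻¹Φ` (a symmetric
matrix with real eigenvalues `λᵢ`), let `𝒟 − I` be `ε`-Lipschitz, and let
`f(x) = 𝒟(x + Φᵀ(ΦΦᵀ)⁻¹(y − Φx))` be the DE-GAP iteration map.  Then `f` is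
`η`-Lipschitz with `η = (1 + ε)·maxᵢ|1 − λᵢ|`. -/
theorem stmt_1 (n N : ℕ) (hn : 0 < n) (hN : 0 < N)
    (Φ : Matrix (Fin n) (Fin N) ℝ) (hΦ : IsUnit (Φ * Φᵀ))
    (P : Matrix (Fin N) (Fin N) ℝ) (hPdef : P = Φᵀ * (Φ * Φᵀ)⁻¹ * Φ)
    (hP : P.IsHermitian)
    (ε : ℝ) (hε : 0 < ε)
    (D : EuclideanSpace ℝ (Fin N) → EuclideanSpace ℝ (Fin N))
    (hD : ∀ x x' : EuclideanSpace ℝ (Fin N), ‖(D x - x) - (D x' - x')‖ ≤ ε * ‖x - x'‖)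
    (y : EuclideanSpace ℝ (Fin n))
    (f : EuclideanSpace ℝ (Fin N) → EuclideanSpace ℝ (Fin N))
    (hf : ∀ x : EuclideanSpace ℝ (Fin N),
      f x = D (x + Matrix.toEuclideanLin (Φᵀ * (Φ * Φᵀ)⁻¹) (y - Matrix.toEuclideanLin Φ x))) :
    ∀ x x' : EuclideanSpace ℝ (Fin N),
      ‖f x - f x'‖ ≤ ((1 + ε) * ⨆ i : Fin N, |1 - hP.eigenvalues i|) * ‖x - x'‖ :=
  stmt_1_general n N Φ P hPdef hP ε hε D hD y f hf
end

section
/- Let n, N be positive integers, Φ a real n×N matrix such that ΦΦᵀ is invertible, P := Φᵀ(ΦΦᵀ)⁻¹Φ with (real) eigenvalues λ₁, …, λ_N, and y ∈ ℝ^n. Let ε > 0 and let 𝒟 : ℝ^N → ℝ^N be differentiable with ‖𝒟'(u) − I‖ ≤ ε (operator norm) for all u ∈ ℝ^N. Then the DE-GAP iteration map f(x) := 𝒟(x + Φᵀ(ΦΦᵀ)⁻¹(y − Φx)) satisfies ‖f'(x)‖ ≤ (1 + ε)·max_i |1 − λ_i| for every x ∈ ℝ^N. -/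
/-!
The derivative of `f` at `x` is `𝒟'(u) ∘ (I - P)` for `u` the point where `𝒟` is evaluated.
The first factor has norm at most `‖I‖ + ‖𝒟'(u) - I‖ ≤ 1 + ε`. For the second, the spectral
theorem writes `I - P = U diag(1 - λᵢ) Uᴴ` with `U` unitary, and in the C⋆-ring of matrices with
the `ℓ²` operator norm conjugation by a unitary is isometric, so `‖I - P‖ = maxᵢ |1 - λᵢ|`.
-/

open Matrix

open scoped Matrix.Norms.L2Operator

theorem Unitary.norm_conjStarAlgAut_apply {S R : Type*} [NormedRing R] [StarRing R]
    [CStarRing R] [SMul S R] [IsScalarTower S R R] [SMulCommClass S R R] (u : unitary R) (x : R) :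
    ‖Unitary.conjStarAlgAut S R u x‖ = ‖x‖ := by
  rw [Unitary.conjStarAlgAut_apply, ← Unitary.coe_star, CStarRing.norm_mul_coe_unitary,
    CStarRing.norm_coe_unitary_mul]

theorem Matrix.IsHermitian.l2_opNorm_one_sub {𝕜 n : Type*} [RCLike 𝕜] [Fintype n]
    [DecidableEq n] {A : Matrix n n 𝕜} (hA : A.IsHermitian) :
    ‖1 - A‖ = ‖fun i ↦ 1 - (hA.eigenvalues i : 𝕜)‖ := by
  conv_lhs => rw [hA.spectral_theorem,
    ← map_one (Unitary.conjStarAlgAut 𝕜 _ hA.eigenvectorUnitary),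
    ← map_sub, Unitary.norm_conjStarAlgAut_apply, ← diagonal_one, diagonal_sub]
  exact l2_opNorm_diagonal _

theorem pi_norm_le_iSup_abs {ι : Type*} [Fintype ι] (v : ι → ℝ) : ‖v‖ ≤ ⨆ i, |v i| :=
  (pi_norm_le_iff_of_nonneg (Real.iSup_nonneg fun i ↦ abs_nonneg (v i))).mpr
    fun i ↦ le_ciSup (f := fun i ↦ |v i|) (Finite.bddAbove_range _) i

theorem ContinuousLinearMap.norm_le_one_add_of_norm_sub_one_le {𝕜 E : Type*}
    [NontriviallyNormedField 𝕜] [NormedAddCommGroup E] [NormedSpace 𝕜 E] {T : E →L[𝕜] E} {ε : ℝ}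
    (h : ‖T - 1‖ ≤ ε) : ‖T‖ ≤ 1 + ε := by
  calc ‖T‖ ≤ ‖(1 : E →L[𝕜] E)‖ + ‖T - 1‖ := norm_le_norm_add_norm_sub' T 1
    _ ≤ 1 + ε := add_le_add ContinuousLinearMap.norm_id_le h

theorem Matrix.add_toEuclideanLin_sub_toEuclideanLin {𝕜 m n : Type*} [RCLike 𝕜] [Fintype m]
    [DecidableEq m] [Fintype n] [DecidableEq n] (B : Matrix n m 𝕜) (A : Matrix m n 𝕜)
    (y : EuclideanSpace 𝕜 m) (z : EuclideanSpace 𝕜 n) :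
    z + toEuclideanLin B (y - toEuclideanLin A z) =
      toEuclideanLin B y + toEuclideanCLM (n := n) (𝕜 := 𝕜) (1 - B * A) z := by
  ext i
  simp only [toLpLin_apply, PiLp.add_apply, PiLp.sub_apply, map_sub,
    map_one, _root_.sub_apply, one_apply_eq_self, ofLp_toEuclideanCLM, ← mulVec_mulVec]
  ring

theorem stmt_14_general (n N : ℕ)
    (Φ : Matrix (Fin n) (Fin N) ℝ)
    (P : Matrix (Fin N) (Fin N) ℝ) (hPdef : P = Φᵀ * (Φ * Φᵀ)⁻¹ * Φ)
    (hP : P.IsHermitian)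
    (y : EuclideanSpace ℝ (Fin n))
    (ε : ℝ)
    (D : EuclideanSpace ℝ (Fin N) → EuclideanSpace ℝ (Fin N))
    (hD : Differentiable ℝ D)
    (hD' : ∀ u : EuclideanSpace ℝ (Fin N),
      ‖fderiv ℝ D u - (1 : EuclideanSpace ℝ (Fin N) →L[ℝ] EuclideanSpace ℝ (Fin N))‖ ≤ ε)
    (f : EuclideanSpace ℝ (Fin N) → EuclideanSpace ℝ (Fin N))
    (hf : ∀ x : EuclideanSpace ℝ (Fin N),
      f x = D (x + Matrix.toEuclideanLin (Φᵀ * (Φ * Φᵀ)⁻¹) (y - Matrix.toEuclideanLin Φ x))) :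
    ∀ x : EuclideanSpace ℝ (Fin N),
      ‖fderiv ℝ f x‖ ≤ (1 + ε) * ⨆ i : Fin N, |1 - hP.eigenvalues i| := by
  intro x
  set c := toEuclideanLin (Φᵀ * (Φ * Φᵀ)⁻¹) y
  set L := toEuclideanCLM (n := Fin N) (𝕜 := ℝ) (1 - P)
  have hf_affine : f = fun z ↦ D (c + L z) := by
    funext z
    rw [hf, add_toEuclideanLin_sub_toEuclideanLin, ← hPdef]
  have hf_deriv : HasFDerivAt f ((fderiv ℝ D (c + L x)).comp L) x :=
    hf_affine ▸ (hD _).hasFDerivAt.comp x (L.hasFDerivAt.const_add c)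
  have hD_norm := ContinuousLinearMap.norm_le_one_add_of_norm_sub_one_le (hD' (c + L x))
  have hL_norm : ‖L‖ ≤ ⨆ i, |1 - hP.eigenvalues i| := by
    rw [← cstar_norm_def, hP.l2_opNorm_one_sub]
    exact pi_norm_le_iSup_abs _
  rw [hf_deriv.fderiv]
  calc ‖(fderiv ℝ D (c + L x)).comp L‖ ≤ ‖fderiv ℝ D (c + L x)‖ * ‖L‖ :=
        ContinuousLinearMap.opNorm_comp_le _ _
    _ ≤ (1 + ε) * ⨆ i, |1 - hP.eigenvalues i| :=
      mul_le_mul hD_norm hL_norm (norm_nonneg L) ((norm_nonneg _).trans hD_norm)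

/-- **Jacobian bound for DE-GAP (proof of Theorem 2).**
If `𝒟` is differentiable with `‖𝒟'(u) − I‖ ≤ ε` for all `u`, then the DE-GAP iteration
map `f(x) = 𝒟(x + Φᵀ(ΦΦᵀ)⁻¹(y − Φx))` satisfies
`‖f'(x)‖ ≤ (1 + ε)·maxᵢ|1 − λᵢ|` for every `x`, where `λᵢ` are the eigenvalues of
`P = Φᵀ(ΦΦᵀ)⁻¹Φ`. -/
theorem stmt_14 (n N : ℕ) (hn : 0 < n) (hN : 0 < N)
    (Φ : Matrix (Fin n) (Fin N) ℝ) (hΦ : IsUnit (Φ * Φᵀ))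
    (P : Matrix (Fin N) (Fin N) ℝ) (hPdef : P = Φᵀ * (Φ * Φᵀ)⁻¹ * Φ)
    (hP : P.IsHermitian)
    (y : EuclideanSpace ℝ (Fin n))
    (ε : ℝ) (hε : 0 < ε)
    (D : EuclideanSpace ℝ (Fin N) → EuclideanSpace ℝ (Fin N))
    (hD : Differentiable ℝ D)
    (hD' : ∀ u : EuclideanSpace ℝ (Fin N),
      ‖fderiv ℝ D u - (1 : EuclideanSpace ℝ (Fin N) →L[ℝ] EuclideanSpace ℝ (Fin N))‖ ≤ ε)
    (f : EuclideanSpace ℝ (Fin N) → EuclideanSpace ℝ (Fin N))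
    (hf : ∀ x : EuclideanSpace ℝ (Fin N),
      f x = D (x + Matrix.toEuclideanLin (Φᵀ * (Φ * Φᵀ)⁻¹) (y - Matrix.toEuclideanLin Φ x))) :
    ∀ x : EuclideanSpace ℝ (Fin N),
      ‖fderiv ℝ f x‖ ≤ (1 + ε) * ⨆ i : Fin N, |1 - hP.eigenvalues i| :=
  stmt_14_general n N Φ P hPdef hP y ε D hD hD' f hf
end
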